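/- arXiv:1104.5044 — 2 statements merged into one kernel-verified Lean document; each statement's English description precedes it below -/
import Mathlib

section
/- Let p : G → H be a surjective group homomorphism with kernel N, S a symmetric generating set of G, S_H = {p(s) : s ∈ S − N}. Then λ₂(H, S_H) ≤ λ₂(G, S). -/
/-- The word length of `g` with respect to a generating set `S`. -/
noncomputable def wordLen {G : Type*} [Group G] (S : Set G) (g : G) : ℕ :=
  sInf {k | ∃ l : List G, (∀ x ∈ l, x ∈ S) ∧ l.length = k ∧ l.prod = g}

/-- `λ₂(G,S) = max_{g ∈ G, s, s' ∈ S} l_S(g⁻¹ s s' g)`. -/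
noncomputable def lam2 {G : Type*} [Group G] (S : Set G) : ℕ :=
  sSup {m | ∃ g : G, ∃ s ∈ S, ∃ s' ∈ S, m = wordLen S (g⁻¹ * (s * s') * g)}

/-! A homomorphism `p` does not increase word length as long as every generator is sent to a
generator or to `1`: deleting the letters that become `1` turns a geodesic word for `g` into a
word for `p g`. Since `G` is finite, every element is a word in `S` without inverses. The map
`(g, s, s') ↦ (p g, p s, p s')` hits every triple over which `λ₂(H, S_H)` is taken, and
`λ₂(G, S)` is a genuine maximum because `G` is finite. -/

section WordLength

variable {G H : Type*} [Group G] [Group H]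

theorem wordLen_prod_le {S : Set G} {l : List G} (hl : ∀ x ∈ l, x ∈ S) :
    wordLen S l.prod ≤ l.length :=
  Nat.sInf_le ⟨l, hl, rfl, rfl⟩

theorem exists_list_length_eq_wordLen {S : Set G} {g : G} (hg : g ∈ Submonoid.closure S) :
    ∃ l : List G, (∀ x ∈ l, x ∈ S) ∧ l.length = wordLen S g ∧ l.prod = g := by
  obtain ⟨l, hl, hprod⟩ := Submonoid.exists_list_of_mem_closure hg
  exact Nat.sInf_mem (s := {k | ∃ l : List G, (∀ x ∈ l, x ∈ S) ∧ l.length = k ∧ l.prod = g})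
    ⟨l.length, l, hl, rfl, hprod⟩

theorem wordLen_map_le (f : G →* H) {S : Set G} {T : Set H} (hST : ∀ s ∈ S, f s ≠ 1 → f s ∈ T)
    {g : G} (hg : g ∈ Submonoid.closure S) : wordLen T (f g) ≤ wordLen S g := by
  classical
  obtain ⟨l, hl, hlen, rfl⟩ := exists_list_length_eq_wordLen hg
  have hmem : ∀ y ∈ (l.map f).filter (· != 1), y ∈ T := by
    intro y hy
    obtain ⟨hy, hy1⟩ := List.mem_filter.1 hy
    obtain ⟨s, hs, rfl⟩ := List.mem_map.1 hy
    exact hST s (hl s hs) (by simpa using hy1)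
  calc wordLen T (f l.prod)
      = wordLen T ((l.map f).filter (· != 1)).prod := by
        rw [List.prod_filter_bne_one, List.prod_hom]
    _ ≤ ((l.map f).filter (· != 1)).length := wordLen_prod_le hmem
    _ ≤ (l.map f).length := List.length_filter_le _ _
    _ = wordLen S l.prod := by rw [List.length_map, hlen]

theorem wordLen_conj_le_lam2 [Finite G] {S : Set G} (g : G) {s s' : G} (hs : s ∈ S)
    (hs' : s' ∈ S) : wordLen S (g⁻¹ * (s * s') * g) ≤ lam2 S := by
  refine le_csSup ((Set.finite_range (wordLen S)).subset ?_).bddAbove ⟨g, s, hs, s', hs', rfl⟩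
  rintro m ⟨g, s, -, s', -, rfl⟩
  exact ⟨_, rfl⟩

theorem lam2_le {S : Set G} {n : ℕ}
    (h : ∀ g : G, ∀ s ∈ S, ∀ s' ∈ S, wordLen S (g⁻¹ * (s * s') * g) ≤ n) : lam2 S ≤ n :=
  csSup_le' <| by
    rintro m ⟨g, s, hs, s', hs', rfl⟩
    exact h g s hs s' hs'

end WordLength

theorem stmt_10_general {G H : Type*} [Group G] [Group H] [Finite G]
    (p : G →* H) (hp : Function.Surjective p)
    (S : Set G) (hgen : Subgroup.closure S = ⊤)
    (SH : Set H) (hSH : SH = {h | ∃ s ∈ S, s ∉ p.ker ∧ p s = h}) :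
    lam2 SH ≤ lam2 S := by
  have hmem_closure : ∀ g : G, g ∈ Submonoid.closure S := fun g => by
    rw [← Subgroup.closure_toSubmonoid_of_finite, hgen]
    exact Subgroup.mem_top g
  have hSSH : ∀ s ∈ S, p s ≠ 1 → p s ∈ SH := fun s hs hs1 => hSH ▸ ⟨s, hs, hs1, rfl⟩
  refine lam2_le fun h t ht t' ht' => ?_
  rw [hSH] at ht ht'
  obtain ⟨s, hs, -, rfl⟩ := ht
  obtain ⟨s', hs', -, rfl⟩ := ht'
  obtain ⟨g, rfl⟩ := hp h
  calc wordLen SH ((p g)⁻¹ * (p s * p s') * p g)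
      = wordLen SH (p (g⁻¹ * (s * s') * g)) := by simp only [map_mul, map_inv]
    _ ≤ wordLen S (g⁻¹ * (s * s') * g) := wordLen_map_le p hSSH (hmem_closure _)
    _ ≤ lam2 S := wordLen_conj_le_lam2 g hs hs'

/-- if `p : G → H` is a surjective homomorphism with kernel `N`, and
`S_H = {p(s) : s ∈ S − N}`, then `λ₂(H, S_H) ≤ λ₂(G, S)`. -/
theorem stmt_10 {G H : Type*} [Group G] [Group H] [Finite G] [Finite H]
    (p : G →* H) (hp : Function.Surjective p)
    (S : Set G) (hsym : ∀ s ∈ S, s⁻¹ ∈ S) (hgen : Subgroup.closure S = ⊤)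
    (hnotker : ¬ S ⊆ (p.ker : Set G))
    (SH : Set H) (hSH : SH = {h | ∃ s ∈ S, s ∉ p.ker ∧ p s = h}) :
    lam2 SH ≤ lam2 S :=
  stmt_10_general p hp S hgen SH hSH
end

section
/- For n ≥ 4, λ₂(Σ_n, T_n) = 2, where T_n is the set of all transpositions in the symmetric group Σ_n. -/
/-- The set of all transpositions in the symmetric group on `Fin n`. -/
def transpositions (n : ℕ) : Set (Equiv.Perm (Fin n)) :=
  {σ | ∃ i j : Fin n, i ≠ j ∧ σ = Equiv.swap i j}

/-!
Every element `g⁻¹ s s' g` is the product `(g⁻¹ s g)(g⁻¹ s' g)` of two transpositions, so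
`λ₂ ≤ 2`. Conversely, a product of two distinct transpositions is neither the identity nor,
being even, a transposition, so its word length is exactly `2`.
-/

section WordLength

variable {G : Type*} [Group G] {S : Set G}

lemma wordLen_le_length {l : List G} (hl : ∀ x ∈ l, x ∈ S) : wordLen S l.prod ≤ l.length :=
  Nat.sInf_le ⟨l, hl, rfl, rfl⟩

lemma wordLen_mul_le_two {s s' : G} (hs : s ∈ S) (hs' : s' ∈ S) : wordLen S (s * s') ≤ 2 := by
  simpa using wordLen_le_length (S := S) (l := [s, s']) (by simp [hs, hs'])

lemma wordLen_mul_eq_two {s s' : G} (hs : s ∈ S) (hs' : s' ∈ S) (h1 : s * s' ≠ 1)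
    (hS : s * s' ∉ S) : wordLen S (s * s') = 2 := by
  refine le_antisymm (wordLen_mul_le_two hs hs') (le_csInf ⟨2, [s, s'], ?_, rfl, by simp⟩ ?_)
  · simp [hs, hs']
  · rintro k ⟨l, hl, rfl, hprod⟩
    match l, hl, hprod with
    | [], _, hprod => exact absurd hprod.symm (by simpa using h1)
    | [x], hl, hprod => exact absurd (by simpa [← hprod] using hl x (by simp)) hS
    | _ :: _ :: _, _, _ => simp

lemma wordLen_conj_mul_le_two (hconj : ∀ g : G, ∀ s ∈ S, g⁻¹ * s * g ∈ S) (g : G) {s s' : G}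
    (hs : s ∈ S) (hs' : s' ∈ S) : wordLen S (g⁻¹ * (s * s') * g) ≤ 2 := by
  have hsplit : g⁻¹ * (s * s') * g = (g⁻¹ * s * g) * (g⁻¹ * s' * g) := by group
  rw [hsplit]
  exact wordLen_mul_le_two (hconj g s hs) (hconj g s' hs')

lemma lam2_eq_two (hconj : ∀ g : G, ∀ s ∈ S, g⁻¹ * s * g ∈ S) {s s' : G} (hs : s ∈ S)
    (hs' : s' ∈ S) (h1 : s * s' ≠ 1) (hS : s * s' ∉ S) : lam2 S = 2 := by
  set M := {m | ∃ g : G, ∃ s ∈ S, ∃ s' ∈ S, m = wordLen S (g⁻¹ * (s * s') * g)}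
  have hle : ∀ m ∈ M, m ≤ 2 := by
    rintro m ⟨g, t, ht, t', ht', rfl⟩
    exact wordLen_conj_mul_le_two hconj g ht ht'
  have hmem : 2 ∈ M := ⟨1, s, hs, s', hs', by simp [wordLen_mul_eq_two hs hs' h1 hS]⟩
  exact le_antisymm (csSup_le ⟨2, hmem⟩ hle) (le_csSup ⟨2, hle⟩ hmem)

end WordLength

section Transpositions

variable {n : ℕ}

lemma conj_mem_transpositions (g : Equiv.Perm (Fin n)) {s : Equiv.Perm (Fin n)}
    (hs : s ∈ transpositions n) : g⁻¹ * s * g ∈ transpositions n := by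
  obtain ⟨i, j, hij, rfl⟩ := hs
  refine ⟨g⁻¹ i, g⁻¹ j, fun h => hij (g⁻¹.injective h), ?_⟩
  rw [mul_assoc, Equiv.swap_mul_eq_mul_swap, inv_mul_cancel_left]

lemma sign_of_mem_transpositions {s : Equiv.Perm (Fin n)} (hs : s ∈ transpositions n) :
    Equiv.Perm.sign s = -1 := by
  obtain ⟨i, j, hij, rfl⟩ := hs
  exact Equiv.Perm.sign_swap hij

lemma mul_not_mem_transpositions {s s' : Equiv.Perm (Fin n)} (hs : s ∈ transpositions n)
    (hs' : s' ∈ transpositions n) : s * s' ∉ transpositions n := fun h => by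
  have hsign := sign_of_mem_transpositions h
  rw [Equiv.Perm.sign_mul, sign_of_mem_transpositions hs, sign_of_mem_transpositions hs'] at hsign
  exact absurd hsign (by decide)

end Transpositions

/-- for `n ≥ 4`, `λ₂(Σ_n, T_n) = 2`. -/
theorem stmt_13 (n : ℕ) (hn : 4 ≤ n) :
    lam2 (transpositions n) = 2 := by
  set a : Fin n := ⟨0, by omega⟩
  set b : Fin n := ⟨1, by omega⟩
  set c : Fin n := ⟨2, by omega⟩
  have hs : Equiv.swap a b ∈ transpositions n := ⟨a, b, by simp [a, b, Fin.ext_iff], rfl⟩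
  have hs' : Equiv.swap a c ∈ transpositions n := ⟨a, c, by simp [a, c, Fin.ext_iff], rfl⟩
  have h1 : Equiv.swap a b * Equiv.swap a c ≠ 1 := fun h => by
    have hc := congrArg (· c) h
    simp [a, b, c, Fin.ext_iff] at hc
  exact lam2_eq_two conj_mem_transpositions hs hs' h1 (mul_not_mem_transpositions hs hs')
end
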